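/- Let Ds, Dt : R → R be the k-linear maps satisfying αs·Ds(f) = f − σs(f) and αt·Dt(f) = f − σt(f) for all f ∈ R (such maps exist and are unique). Suppose 4 − δ² is invertible in k and set ωt := (4−δ²)^{−1}·(2αt + δαs); then Dt(ωt) = 1 and Ds(ωt) = 0. Moreover, for every m ≥ 2, applying to ωt^{m−1} the alternating composition of m−1 Demazure operators in which Dt is applied first (i.e. ⋯ ∘ Ds ∘ Dt, with m−1 factors total) yields the quantum factorial [m−1]! := [1]·[2]⋯[m−1]. -/

import Mathlib

open MvPolynomial

/-- The quantum numbers `[n] ∈ k` attached to `δ ∈ k`: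
`[0] = 0`, `[1] = 1`, `[n+1] = δ·[n] − [n−1]`. -/
def qn {k : Type*} [CommRing k] (δ : k) : ℕ → k
  | 0 => 0
  | 1 => 1
  | n + 2 => δ * qn δ (n + 1) - qn δ n

/-- The involution `σs` of `R = k[αs, αt]` (with `αs = X 0`, `αt = X 1`) determined by
`σs(αs) = −αs`, `σs(αt) = αt + δ·αs`. -/
noncomputable def σs {k : Type*} [CommRing k] (δ : k) :
    MvPolynomial (Fin 2) k →ₐ[k] MvPolynomial (Fin 2) k :=
  aeval ![-(X 0), X 1 + C δ * X 0]

/-- The involution `σt` of `R = k[αs, αt]` determined by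
`σt(αt) = −αt`, `σt(αs) = αs + δ·αt`. -/
noncomputable def σt {k : Type*} [CommRing k] (δ : k) :
    MvPolynomial (Fin 2) k →ₐ[k] MvPolynomial (Fin 2) k :=
  aeval ![X 0 + C δ * X 1, -(X 1)]

/-- The alternating composition `⋯ ∘ B ∘ A` with `n` factors,
the rightmost factor (applied first) being `A`. -/
def altCompR {k M : Type*} [CommRing k] [AddCommGroup M] [Module k M] :
    (M →ₗ[k] M) → (M →ₗ[k] M) → ℕ → (M →ₗ[k] M)
  | _, _, 0 => LinearMap.id
  | A, B, n + 1 => altCompR B A n ∘ₗ A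

/-!
Write `x = ωs` and `y = ωt`. Each Demazure operator is a twisted derivation that kills one of
these weights, sends the other to `1`, and lowers the degree in `x, y` by one, so an alternating
composition of `n` of them kills everything of degree `< n`. Both operators are linear over the
invariant quadric `Z = x² − δxy + y²`, and modulo `Z` the moved weight `y` and its reflection
`δx − y` have sum `δx` and product `x²`; hence `Dt (y^(n+1)) ≡ [n+1] x^n` modulo `Z` times terms
of degree `< n`, by the recursion defining the quantum numbers. Induction on `n`, exchanging the
roles of `s` and `t`, then yields `[n]!`.
-/

theorem commute_altCompR {k M : Type*} [CommRing k] [AddCommGroup M] [Module k M]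
    {L A B : Module.End k M} (hA : Commute L A) (hB : Commute L B) (n : ℕ) :
    Commute L (altCompR A B n) := by
  induction n generalizing A B with
  | zero => exact Commute.one_right L
  | succ n ih => exact (ih hB hA).mul_right hA

section Abstract

variable {k S : Type*} [CommRing k] [CommRing S] [Algebra k S]

variable (k) in
def degreeLTSpan (x y : S) (m : ℕ) : Submodule k S :=
  Submodule.span k {f | ∃ i j : ℕ, i + j < m ∧ f = x ^ i * y ^ j}

theorem degreeLTSpan_comm (x y : S) (m : ℕ) :
    degreeLTSpan k x y m = degreeLTSpan k y x m := by
  suffices ∀ x y : S, degreeLTSpan k x y m ≤ degreeLTSpan k y x m from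
    le_antisymm (this x y) (this y x)
  intro x y
  refine Submodule.span_le.2 ?_
  rintro _ ⟨i, j, hij, rfl⟩
  exact Submodule.subset_span ⟨j, i, by omega, mul_comm _ _⟩

theorem degreeLTSpan_zero (x y : S) : degreeLTSpan k x y 0 = ⊥ := by
  simp [degreeLTSpan]

theorem degreeLTSpan_mono (x y : S) : Monotone (degreeLTSpan k x y) :=
  fun _ _ h ↦ Submodule.span_mono fun _ ⟨i, j, hij, hf⟩ ↦ ⟨i, j, by omega, hf⟩

theorem pow_mul_pow_mem_degreeLTSpan {x y : S} {i j m : ℕ} (h : i + j < m) :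
    x ^ i * y ^ j ∈ degreeLTSpan k x y m :=
  Submodule.subset_span ⟨i, j, h, rfl⟩

theorem mul_left_mem_degreeLTSpan {x y f : S} {m : ℕ} (hf : f ∈ degreeLTSpan k x y m) :
    x * f ∈ degreeLTSpan k x y (m + 1) := by
  suffices degreeLTSpan k x y m ≤ (degreeLTSpan k x y (m + 1)).comap (LinearMap.mulLeft k x) from
    this hf
  refine Submodule.span_le.2 ?_
  rintro _ ⟨i, j, hij, rfl⟩
  change x * (x ^ i * y ^ j) ∈ degreeLTSpan k x y (m + 1)
  rw [← mul_assoc, ← pow_succ']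
  exact pow_mul_pow_mem_degreeLTSpan (by omega)

theorem mul_right_mem_degreeLTSpan {x y f : S} {m : ℕ} (hf : f ∈ degreeLTSpan k x y m) :
    y * f ∈ degreeLTSpan k x y (m + 1) := by
  rw [degreeLTSpan_comm] at hf ⊢
  exact mul_left_mem_degreeLTSpan hf

theorem pow_mul_mem_degreeLTSpan {x y f : S} {m : ℕ} (hf : f ∈ degreeLTSpan k x y m) (i : ℕ) :
    x ^ i * f ∈ degreeLTSpan k x y (m + i) := by
  induction i with
  | zero => simpa using hf
  | succ i ih => simpa only [pow_succ', mul_assoc, ← add_assoc] using mul_left_mem_degreeLTSpan ih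

def invariantQuadric (δ : k) (x y : S) : S :=
  x ^ 2 - algebraMap k S δ * x * y + y ^ 2

theorem invariantQuadric_comm (δ : k) (x y : S) :
    invariantQuadric δ x y = invariantQuadric δ y x := by
  unfold invariantQuadric; ring

structure IsDemazure (δ : k) (σ : S →ₐ[k] S) (D : S →ₗ[k] S) (x y : S) : Prop where
  leibniz : ∀ f g, D (f * g) = D f * g + σ f * D g
  twist_fixed : σ x = x
  twist_moved : σ y = algebraMap k S δ * x - y
  map_fixed : D x = 0
  map_moved : D y = 1

namespace IsDemazure

variable {δ : k} {σ : S →ₐ[k] S} {D : S →ₗ[k] S} {x y : S}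

theorem of_mul_eq_sub {a : S} (ha : IsLeftRegular a) (hD : ∀ f, a * D f = f - σ f)
    (hx : σ x = x) (hy : σ y = algebraMap k S δ * x - y) (hya : y - σ y = a) :
    IsDemazure δ σ D x y where
  leibniz f g := ha <| by
    beta_reduce
    rw [hD, _root_.map_mul]
    linear_combination (-g) * hD f - σ f * hD g
  twist_fixed := hx
  twist_moved := hy
  map_fixed := ha <| by beta_reduce; rw [hD, hx, sub_self, mul_zero]
  map_moved := ha <| by beta_reduce; rw [hD, hya, mul_one]

variable (hD : IsDemazure δ σ D x y)
include hD

theorem map_one : D 1 = 0 := by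
  simpa using hD.leibniz 1 1

theorem map_fixed_pow_mul (i : ℕ) (g : S) : D (x ^ i * g) = x ^ i * D g := by
  induction i with
  | zero => simp
  | succ i ih => rw [pow_succ', mul_assoc, hD.leibniz, hD.map_fixed, hD.twist_fixed, ih]; ring

theorem map_algebraMap (c : k) : D (algebraMap k S c) = 0 := by
  rw [Algebra.algebraMap_eq_smul_one, LinearMap.map_smul, hD.map_one, smul_zero]

theorem commute_mulLeft_invariantQuadric :
    Commute (LinearMap.mulLeft k (invariantQuadric δ x y)) D := by
  have hZ : D (invariantQuadric δ x y) = 0 := by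
    simp only [invariantQuadric, sq, map_add, map_sub, hD.leibniz, hD.map_algebraMap,
      _root_.map_mul, AlgHom.commutes, hD.map_fixed, hD.map_moved, hD.twist_fixed, hD.twist_moved]
    ring
  have hσZ : σ (invariantQuadric δ x y) = invariantQuadric δ x y := by
    simp only [invariantQuadric, map_add, map_sub, _root_.map_mul, map_pow, AlgHom.commutes,
      hD.twist_fixed, hD.twist_moved]
    ring
  refine LinearMap.ext fun g ↦ ?_
  change invariantQuadric δ x y * D g = D (invariantQuadric δ x y * g)
  rw [hD.leibniz, hZ, hσZ, zero_mul, zero_add]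

theorem map_moved_pow_succ (j : ℕ) :
    D (y ^ (j + 1)) = y ^ j + (algebraMap k S δ * x - y) * D (y ^ j) := by
  rw [pow_succ', hD.leibniz, hD.map_moved, hD.twist_moved, one_mul]

theorem map_moved_pow_mem (j : ℕ) : D (y ^ j) ∈ degreeLTSpan k x y j := by
  induction j with
  | zero => simp [hD.map_one]
  | succ j ih =>
    have hyj : y ^ j ∈ degreeLTSpan k x y (j + 1) := by
      simpa using pow_mul_pow_mem_degreeLTSpan (k := k) (x := x) (i := 0) (j := j) (by omega)
    rw [hD.map_moved_pow_succ, sub_mul, mul_assoc, ← Algebra.smul_def]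
    exact add_mem hyj (sub_mem (Submodule.smul_mem _ _ (mul_left_mem_degreeLTSpan ih))
      (mul_right_mem_degreeLTSpan ih))

theorem map_mem_degreeLTSpan {m : ℕ} {f : S} (hf : f ∈ degreeLTSpan k x y (m + 1)) :
    D f ∈ degreeLTSpan k x y m := by
  suffices degreeLTSpan k x y (m + 1) ≤ (degreeLTSpan k x y m).comap D from this hf
  refine Submodule.span_le.2 ?_
  rintro _ ⟨i, j, hij, rfl⟩
  rw [SetLike.mem_coe, Submodule.mem_comap, hD.map_fixed_pow_mul]
  exact degreeLTSpan_mono x y (by omega) (pow_mul_mem_degreeLTSpan (hD.map_moved_pow_mem j) i)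

theorem map_moved_pow_add_two (n : ℕ) :
    D (y ^ (n + 2)) = algebraMap k S δ * x * D (y ^ (n + 1)) - x ^ 2 * D (y ^ n)
      + invariantQuadric δ x y * D (y ^ n) := by
  rw [hD.map_moved_pow_succ (n + 1), hD.map_moved_pow_succ n, invariantQuadric]
  ring

theorem exists_map_moved_pow (n : ℕ) :
    ∃ r ∈ degreeLTSpan k x y n, D (y ^ (n + 1)) =
      algebraMap k S (qn δ (n + 1)) * x ^ n + invariantQuadric δ x y * r := by
  induction n using Nat.twoStepInduction with
  | zero => exact ⟨0, zero_mem _, by simp [qn, hD.map_moved]⟩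
  | one =>
    refine ⟨0, zero_mem _, ?_⟩
    rw [hD.map_moved_pow_succ, pow_one, hD.map_moved]
    simp [qn]
  | more n ih₀ ih₁ =>
    obtain ⟨r₀, hr₀, h₀⟩ := ih₀
    obtain ⟨r₁, hr₁, h₁⟩ := ih₁
    refine ⟨δ • (x * r₁) - x ^ 2 * r₀ + D (y ^ (n + 1)), ?_, ?_⟩
    · refine add_mem (sub_mem (Submodule.smul_mem _ _ (mul_left_mem_degreeLTSpan hr₁))
        (pow_mul_mem_degreeLTSpan hr₀ 2)) ?_
      exact degreeLTSpan_mono x y (by omega) (hD.map_moved_pow_mem (n + 1))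
    · have hq : qn δ (n + 3) = δ * qn δ (n + 2) - qn δ (n + 1) := rfl
      rw [hD.map_moved_pow_add_two (n + 1), h₁, h₀, hq, Algebra.smul_def]
      simp only [map_sub, _root_.map_mul]
      ring

end IsDemazure

section Alternating

variable {δ : k} {σA σB : S →ₐ[k] S} {A B : S →ₗ[k] S} {x y : S}

theorem altCompR_mem_degreeLTSpan (hA : IsDemazure δ σA A y x) (hB : IsDemazure δ σB B x y)
    {m n : ℕ} {f : S} (hf : f ∈ degreeLTSpan k x y (m + n)) :
    altCompR B A n f ∈ degreeLTSpan k x y m := by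
  induction n generalizing A B σA σB x y f with
  | zero => exact hf
  | succ n ih =>
    have hBf := hB.map_mem_degreeLTSpan (m := m + n) hf
    rw [degreeLTSpan_comm] at hBf ⊢
    exact ih hB hA hBf

theorem altCompR_moved_pow (hA : IsDemazure δ σA A y x) (hB : IsDemazure δ σB B x y) (n : ℕ) :
    altCompR B A n (y ^ n) = algebraMap k S (∏ j ∈ Finset.Icc 1 n, qn δ j) := by
  induction n generalizing A B σA σB x y with
  | zero => simp [altCompR]
  | succ n ih =>
    obtain ⟨r, hr, hBy⟩ := hB.exists_map_moved_pow n
    have hZ : Commute (LinearMap.mulLeft k (invariantQuadric δ x y)) (altCompR A B n) := by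
      refine commute_altCompR ?_ hB.commute_mulLeft_invariantQuadric n
      rw [invariantQuadric_comm]
      exact hA.commute_mulLeft_invariantQuadric
    have hr₀ : altCompR A B n r = 0 := by
      rw [degreeLTSpan_comm, ← zero_add n] at hr
      simpa [degreeLTSpan_zero] using altCompR_mem_degreeLTSpan hB hA hr
    have hZr : altCompR A B n (invariantQuadric δ x y * r) = 0 := by
      simpa [hr₀] using (LinearMap.congr_fun hZ r).symm
    rw [altCompR, LinearMap.comp_apply, hBy, map_add, hZr, add_zero, ← Algebra.smul_def,
      LinearMap.map_smul, ih hB hA, Algebra.smul_def, ← map_mul,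
      Finset.prod_Icc_succ_top (by omega), mul_comm]

end Alternating

end Abstract

section Realization

variable {k : Type*} [CommRing k] {δ u : k}

theorem C_mul_four_sub_sq (hu : u * (4 - δ ^ 2) = 1) :
    (C u * (4 - C δ ^ 2) : MvPolynomial (Fin 2) k) = 1 := by
  rw [← map_ofNat C 4, ← map_pow, ← map_sub, ← map_mul, hu, map_one]

theorem isDemazure_σs (hu : u * (4 - δ ^ 2) = 1)
    {Ds : MvPolynomial (Fin 2) k →ₗ[k] MvPolynomial (Fin 2) k}
    (hDs : ∀ f, X 0 * Ds f = f - σs δ f) :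
    IsDemazure δ (σs δ) Ds (C u * (2 * X 1 + C δ * X 0)) (C u * (2 * X 0 + C δ * X 1)) := by
  refine .of_mul_eq_sub isRegular_X.left hDs ?_ ?_ ?_ <;>
    simp only [σs, map_mul, map_add, aeval_C, aeval_X, map_ofNat, Matrix.cons_val_zero,
      Matrix.cons_val_one, algebraMap_eq]
  · ring
  · ring
  · linear_combination (X 0 : MvPolynomial (Fin 2) k) * C_mul_four_sub_sq hu

theorem isDemazure_σt (hu : u * (4 - δ ^ 2) = 1)
    {Dt : MvPolynomial (Fin 2) k →ₗ[k] MvPolynomial (Fin 2) k}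
    (hDt : ∀ f, X 1 * Dt f = f - σt δ f) :
    IsDemazure δ (σt δ) Dt (C u * (2 * X 0 + C δ * X 1)) (C u * (2 * X 1 + C δ * X 0)) := by
  refine .of_mul_eq_sub isRegular_X.left hDt ?_ ?_ ?_ <;>
    simp only [σt, map_mul, map_add, aeval_C, aeval_X, map_ofNat, Matrix.cons_val_zero,
      Matrix.cons_val_one, algebraMap_eq]
  · ring
  · ring
  · linear_combination (X 1 : MvPolynomial (Fin 2) k) * C_mul_four_sub_sq hu

end Realization

/-- Let `Ds, Dt` be the simple Demazure operators of `R = k[αs, αt]`.  If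
`u = (4−δ²)⁻¹` exists and `ωt = u·(2αt + δαs)`, then `Dt(ωt) = 1`, `Ds(ωt) = 0`,
and for every `m ≥ 2` the alternating composition `⋯ ∘ Ds ∘ Dt` of `m−1` Demazure
operators (with `Dt` applied first) sends `ωt^{m−1}` to the quantum factorial
`[m−1]! = [1]·[2]⋯[m−1]`. -/
theorem demazure_on_fundamental_weight_powers {k : Type*} [CommRing k] (δ : k)
    (u : k) (hu : u * (4 - δ ^ 2) = 1)
    (Ds Dt : MvPolynomial (Fin 2) k →ₗ[k] MvPolynomial (Fin 2) k)
    (hDs : ∀ f, X 0 * Ds f = f - σs δ f)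
    (hDt : ∀ f, X 1 * Dt f = f - σt δ f) :
    Dt (C u * (2 * X 1 + C δ * X 0)) = 1 ∧
    Ds (C u * (2 * X 1 + C δ * X 0)) = 0 ∧
    ∀ m : ℕ, 2 ≤ m →
      altCompR Dt Ds (m - 1) ((C u * (2 * X 1 + C δ * X 0)) ^ (m - 1)) =
        C (∏ j ∈ Finset.Icc 1 (m - 1), qn δ j) := by
  have hDs' := isDemazure_σs hu hDs
  have hDt' := isDemazure_σt hu hDt
  exact ⟨hDt'.map_moved, hDs'.map_fixed, fun m _ ↦ altCompR_moved_pow hDs' hDt' (m - 1)⟩
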